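/- In the Laguerre basis, under integration by parts (⟨b',ℓ_j⟩ = -⟨b,ℓ_j'⟩ for j < m), one has ‖b_m' - (b')_m‖² = 4m (Σ_{k=0}^{m-1} ⟨b,ℓ_k⟩)². -/

import Mathlib

/-! The Laguerre functions satisfy `ℓ_j' = -ℓ_j - 2 ∑_{k<j} ℓ_k`, because
`L_{j+1} = L_j - ∫₀ˣ L_j`. With `a_k = ⟨b, ℓ_k⟩`, integration by parts therefore gives
`⟨b', ℓ_j⟩ = a_j + 2 ∑_{k<j} a_k`, while differentiating `b_m = ∑_j a_j ℓ_j` termwise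
gives `b_m' = -∑_j a_j (ℓ_j + 2 ∑_{k<j} ℓ_k)`. The cross terms combine so that
`b_m' - (b')_m = -2 (∑_k a_k) (∑_k ℓ_k)`, and orthonormality of the `ℓ_k` yields the norm.
Orthonormality reduces, after the substitution `u = 2x` and `∫ u^n e^{-u} = n!`, to two
alternating binomial sums, both iterated forward differences of `n ↦ C(n, r)`. -/

open MeasureTheory

/-- The j-th Laguerre polynomial `L_j(x) = ∑_{k=0}^j C(j,k)(-1)^k x^k / k!`. -/
noncomputable def laguerrePoly (j : ℕ) (x : ℝ) : ℝ :=
  ∑ k ∈ Finset.range (j + 1), (j.choose k : ℝ) * (-1) ^ k * x ^ k / (Nat.factorial k)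

/-- The scaled Laguerre function `ℓ_j(x) = √2 L_j(2x) e^{-x}`. -/
noncomputable def laguerreFun (j : ℕ) (x : ℝ) : ℝ :=
  Real.sqrt 2 * laguerrePoly j (2 * x) * Real.exp (-x)

/-- Laguerre coefficient `⟨b, ℓ_j⟩ = ∫_0^∞ b ℓ_j` in L²(ℝ₊). -/
noncomputable def laguerreCoef (b : ℝ → ℝ) (j : ℕ) : ℝ :=
  ∫ x in Set.Ioi (0 : ℝ), b x * laguerreFun j x

/-- Orthogonal projection of `b` onto `span{ℓ_0,…,ℓ_{m-1}}`. -/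
noncomputable def laguerreProj (b : ℝ → ℝ) (m : ℕ) (x : ℝ) : ℝ :=
  ∑ j ∈ Finset.range m, laguerreCoef b j * laguerreFun j x

open Finset Set Nat Real

theorem fwdDiff_iter_choose_apply (n m y : ℕ) :
    (fwdDiff 1)^[n] (fun x ↦ (x.choose m : ℤ)) y
      = if n ≤ m then (y.choose (m - n) : ℤ) else 0 := by
  split_ifs with h
  · obtain ⟨j, rfl⟩ := Nat.exists_eq_add_of_le h
    rw [fwdDiff_iter_choose, Nat.add_sub_cancel_left]
  · obtain ⟨j, rfl⟩ := Nat.exists_eq_add_of_lt (not_le.mp h)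
    rw [show m + j + 1 = (j + 1) + m by ring, Function.iterate_add_apply,
      show (fwdDiff 1)^[m] (fun x ↦ (x.choose m : ℤ)) = _ from fwdDiff_iter_choose 0 m]
    simp only [choose_zero_right, cast_one, Function.iterate_succ_apply, fwdDiff_const]
    simp [fwdDiff_iter_eq_sum_shift]

theorem neg_one_pow_mul_neg_one_pow_sub {R : Type*} [Monoid R] [HasDistribNeg R] {q n : ℕ}
    (h : q ≤ n) : (-1 : R) ^ n * (-1) ^ (n - q) = (-1) ^ q := by
  obtain ⟨d, rfl⟩ := Nat.exists_eq_add_of_le h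
  rw [Nat.add_sub_cancel_left, pow_add, mul_assoc, ← pow_add, Even.neg_one_pow ⟨d, rfl⟩,
    mul_one]

theorem sum_range_neg_one_pow_mul_choose_mul_choose_add (n m y : ℕ) :
    ∑ q ∈ range (n + 1), (-1 : ℤ) ^ q * n.choose q * (y + q).choose m
      = (-1) ^ n * if n ≤ m then (y.choose (m - n) : ℤ) else 0 := by
  rw [← fwdDiff_iter_choose_apply, fwdDiff_iter_eq_sum_shift, mul_sum]
  refine sum_congr rfl fun q hq => ?_
  rw [smul_eq_mul, ← mul_assoc, ← mul_assoc,
    neg_one_pow_mul_neg_one_pow_sub (mem_range_succ_iff.mp hq)]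
  simp

noncomputable def laguerrePolyCoeff (j p : ℕ) : ℝ := j.choose p * (-1) ^ p / p !

theorem laguerrePoly_eq_sum (j : ℕ) (x : ℝ) :
    laguerrePoly j x = ∑ p ∈ range (j + 1), laguerrePolyCoeff j p * x ^ p := by
  simp only [laguerrePoly, laguerrePolyCoeff, div_mul_eq_mul_div]

theorem laguerrePolyCoeff_zero (j : ℕ) : laguerrePolyCoeff j 0 = 1 := by
  simp [laguerrePolyCoeff]

theorem laguerrePolyCoeff_succ_succ (j p : ℕ) :
    laguerrePolyCoeff (j + 1) (p + 1)
      = laguerrePolyCoeff j (p + 1) - laguerrePolyCoeff j p / (p + 1) := by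
  simp only [laguerrePolyCoeff, choose_succ_succ', factorial_succ]
  push_cast
  field_simp
  ring

theorem sum_laguerrePolyCoeff_mul_factorial_add (k p : ℕ) :
    ∑ q ∈ range (k + 1), laguerrePolyCoeff k q * (p + q)! = (-1) ^ k * p.choose k * p ! := by
  have hsum : ∑ q ∈ range (k + 1), (-1 : ℤ) ^ q * k.choose q * (p + q).choose p
      = (-1) ^ k * p.choose k := by
    rw [sum_range_neg_one_pow_mul_choose_mul_choose_add]
    split_ifs with h
    · rw [choose_symm h]
    · rw [choose_eq_zero_of_lt (not_le.mp h), cast_zero]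
  calc ∑ q ∈ range (k + 1), laguerrePolyCoeff k q * (p + q)!
      = ∑ q ∈ range (k + 1),
          ((-1 : ℤ) ^ q * k.choose q * (p + q).choose p : ℤ) * (p ! : ℝ) := by
        refine sum_congr rfl fun q _ => ?_
        rw [← add_choose_mul_factorial_mul_factorial, ← choose_symm_add, laguerrePolyCoeff]
        push_cast
        field_simp
    _ = (-1) ^ k * p.choose k * p ! := by
        rw [← sum_mul]
        exact_mod_cast congrArg (fun z : ℤ => (z : ℝ) * p !) hsum

theorem sum_laguerrePolyCoeff_mul_laguerrePolyCoeff_mul_factorial (j k : ℕ) :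
    ∑ p ∈ range (j + 1), ∑ q ∈ range (k + 1),
      laguerrePolyCoeff j p * laguerrePolyCoeff k q * (p + q)! = if j = k then 1 else 0 := by
  calc ∑ p ∈ range (j + 1), ∑ q ∈ range (k + 1),
        laguerrePolyCoeff j p * laguerrePolyCoeff k q * (p + q)!
      = (-1) ^ k * ((∑ p ∈ range (j + 1),
          (-1 : ℤ) ^ p * j.choose p * (0 + p).choose k : ℤ) : ℝ) := by
        simp_rw [mul_assoc, ← mul_sum, sum_laguerrePolyCoeff_mul_factorial_add]
        push_cast
        rw [mul_sum]
        refine sum_congr rfl fun p _ => ?_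
        rw [laguerrePolyCoeff, zero_add]
        field_simp
    _ = if j = k then 1 else 0 := by
        rw [sum_range_neg_one_pow_mul_choose_mul_choose_add]
        rcases lt_trichotomy j k with h | rfl | h
        · simp [h.le, h.ne, choose_eq_zero_of_lt (Nat.sub_pos_of_lt h)]
        · simp [← mul_pow]
        · simp [not_le.mpr h, h.ne']

theorem integrableOn_Ioi_exp_neg_mul_pow (n : ℕ) :
    IntegrableOn (fun x : ℝ => exp (-x) * x ^ n) (Ioi 0) := by
  simpa using GammaIntegral_convergent (s := n + 1) (by positivity)

theorem integral_Ioi_exp_neg_mul_pow (n : ℕ) :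
    ∫ x in Ioi (0 : ℝ), exp (-x) * x ^ n = n ! := by
  simpa using (Gamma_eq_integral (s := n + 1) (by positivity)).symm.trans
    (Gamma_nat_eq_factorial n)

theorem laguerrePoly_mul_laguerrePoly_mul_exp (j k : ℕ) (u : ℝ) :
    laguerrePoly j u * laguerrePoly k u * exp (-u)
      = ∑ p ∈ range (j + 1), ∑ q ∈ range (k + 1),
        laguerrePolyCoeff j p * laguerrePolyCoeff k q * (exp (-u) * u ^ (p + q)) := by
  rw [laguerrePoly_eq_sum, laguerrePoly_eq_sum, sum_mul_sum, sum_mul]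
  refine sum_congr rfl fun p _ => ?_
  rw [sum_mul]
  exact sum_congr rfl fun q _ => by ring

theorem integrableOn_laguerrePoly_mul_laguerrePoly_mul_exp (j k : ℕ) :
    IntegrableOn (fun u => laguerrePoly j u * laguerrePoly k u * exp (-u)) (Ioi 0) := by
  simp_rw [laguerrePoly_mul_laguerrePoly_mul_exp]
  exact integrable_finsetSum _ fun p _ => integrable_finsetSum _ fun q _ =>
    (integrableOn_Ioi_exp_neg_mul_pow (p + q)).const_mul _

theorem integral_laguerrePoly_mul_laguerrePoly_mul_exp (j k : ℕ) :
    ∫ u in Ioi (0 : ℝ), laguerrePoly j u * laguerrePoly k u * exp (-u)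
      = if j = k then 1 else 0 := by
  simp_rw [laguerrePoly_mul_laguerrePoly_mul_exp]
  rw [← sum_laguerrePolyCoeff_mul_laguerrePolyCoeff_mul_factorial,
    integral_finsetSum _ fun p _ => integrable_finsetSum _ fun q _ =>
      (integrableOn_Ioi_exp_neg_mul_pow (p + q)).const_mul _]
  refine sum_congr rfl fun p _ => ?_
  rw [integral_finsetSum _ fun q _ => (integrableOn_Ioi_exp_neg_mul_pow (p + q)).const_mul _]
  refine sum_congr rfl fun q _ => ?_
  rw [integral_const_mul, integral_Ioi_exp_neg_mul_pow]

theorem laguerreFun_mul_laguerreFun (j k : ℕ) (x : ℝ) :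
    laguerreFun j x * laguerreFun k x
      = 2 * (laguerrePoly j (2 * x) * laguerrePoly k (2 * x) * exp (-(2 * x))) := by
  have hexp : exp (-(2 * x)) = exp (-x) * exp (-x) := by rw [← exp_add]; ring_nf
  rw [laguerreFun, laguerreFun, hexp]
  linear_combination laguerrePoly j (2 * x) * laguerrePoly k (2 * x) * exp (-x) ^ 2 *
    mul_self_sqrt (zero_le_two : (0 : ℝ) ≤ 2)

theorem integrableOn_laguerreFun_mul_laguerreFun (j k : ℕ) :
    IntegrableOn (fun x => laguerreFun j x * laguerreFun k x) (Ioi 0) := by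
  simp_rw [laguerreFun_mul_laguerreFun]
  refine Integrable.const_mul ((integrableOn_Ioi_comp_mul_left_iff
    (fun u => laguerrePoly j u * laguerrePoly k u * exp (-u)) 0 two_pos).2 ?_) 2
  simpa using integrableOn_laguerrePoly_mul_laguerrePoly_mul_exp j k

theorem integral_laguerreFun_mul_laguerreFun (j k : ℕ) :
    ∫ x in Ioi (0 : ℝ), laguerreFun j x * laguerreFun k x = if j = k then 1 else 0 := by
  simp_rw [laguerreFun_mul_laguerreFun]
  rw [integral_const_mul, integral_comp_mul_left_Ioi
    (fun u => laguerrePoly j u * laguerrePoly k u * exp (-u)) 0 two_pos, mul_zero, smul_eq_mul,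
    integral_laguerrePoly_mul_laguerrePoly_mul_exp, ← mul_assoc, mul_inv_cancel₀ two_ne_zero,
    one_mul]

theorem memLp_laguerreFun (j : ℕ) : MemLp (laguerreFun j) 2 (volume.restrict (Ioi 0)) := by
  have hcont : Continuous (laguerreFun j) := by unfold laguerreFun laguerrePoly; fun_prop
  rw [memLp_two_iff_integrable_sq hcont.aestronglyMeasurable]
  simp_rw [sq]
  exact integrableOn_laguerreFun_mul_laguerreFun j j

theorem laguerrePoly_succ (j : ℕ) (x : ℝ) :
    laguerrePoly (j + 1) x = laguerrePoly j x
      - ∑ p ∈ range (j + 1), laguerrePolyCoeff j p * (x ^ (p + 1) / (p + 1)) := by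
  have hL : laguerrePoly j x = ∑ p ∈ range (j + 2), laguerrePolyCoeff j p * x ^ p := by
    rw [laguerrePoly_eq_sum, sum_range_succ _ (j + 1), laguerrePolyCoeff,
      choose_eq_zero_of_lt (lt_add_one j)]
    simp
  have hdiv : ∑ p ∈ range (j + 1), laguerrePolyCoeff j p / (p + 1) * x ^ (p + 1)
      = ∑ p ∈ range (j + 1), laguerrePolyCoeff j p * (x ^ (p + 1) / (p + 1)) :=
    sum_congr rfl fun _ _ => by ring
  rw [hL, laguerrePoly_eq_sum, sum_range_succ', sum_range_succ' _ (j + 1)]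
  simp only [laguerrePolyCoeff_succ_succ, sub_mul, sum_sub_distrib, hdiv, laguerrePolyCoeff_zero]
  ring

theorem hasDerivAt_laguerrePoly (j : ℕ) (u : ℝ) :
    HasDerivAt (laguerrePoly j) (-∑ i ∈ range j, laguerrePoly i u) u := by
  induction j with
  | zero =>
    have h0 : laguerrePoly 0 = fun _ => 1 := by ext; simp [laguerrePoly]
    simpa [h0] using hasDerivAt_const u (1 : ℝ)
  | succ j ih =>
    have hprimitive : HasDerivAt
        (fun x => ∑ p ∈ range (j + 1), laguerrePolyCoeff j p * (x ^ (p + 1) / (p + 1)))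
        (laguerrePoly j u) u := by
      rw [laguerrePoly_eq_sum]
      refine HasDerivAt.fun_sum fun p _ => ?_
      refine (((hasDerivAt_pow (p + 1) u).div_const ((p : ℝ) + 1)).const_mul
        (laguerrePolyCoeff j p)).congr_deriv ?_
      push_cast
      field_simp
    rw [show laguerrePoly (j + 1) = _ from funext (laguerrePoly_succ j), sum_range_succ, neg_add]
    exact ih.sub hprimitive

theorem hasDerivAt_laguerreFun (j : ℕ) (x : ℝ) :
    HasDerivAt (laguerreFun j) (-laguerreFun j x - 2 * ∑ i ∈ range j, laguerreFun i x) x := by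
  have hL := (hasDerivAt_laguerrePoly j (2 * x)).comp x ((hasDerivAt_id x).const_mul 2)
  have hexp : HasDerivAt (fun y => exp (-y)) (-exp (-x)) x := by
    simpa using (hasDerivAt_neg x).exp
  have hsum : ∑ i ∈ range j, laguerreFun i x
      = √2 * (∑ i ∈ range j, laguerrePoly i (2 * x)) * exp (-x) := by
    simp only [laguerreFun, mul_sum, sum_mul]
  refine ((hL.const_mul √2).mul hexp).congr_deriv ?_
  rw [hsum, laguerreFun, Function.comp_apply]
  ring

theorem hasDerivAt_laguerreProj (b : ℝ → ℝ) (m : ℕ) (x : ℝ) :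
    HasDerivAt (laguerreProj b m) (∑ j ∈ range m,
      laguerreCoef b j * (-laguerreFun j x - 2 * ∑ i ∈ range j, laguerreFun i x)) x :=
  HasDerivAt.fun_sum fun j _ => (hasDerivAt_laguerreFun j x).const_mul _

theorem laguerreCoef_eq_of_integral_mul_laguerreFun_eq {b b' : ℝ → ℝ}
    (hb : MemLp b 2 (volume.restrict (Ioi 0))) {j : ℕ}
    (hIPP : ∫ x in Ioi (0 : ℝ), b' x * laguerreFun j x
      = -∫ x in Ioi (0 : ℝ), b x * deriv (laguerreFun j) x) :
    laguerreCoef b' j = laguerreCoef b j + 2 * ∑ k ∈ range j, laguerreCoef b k := by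
  have hint (k : ℕ) : Integrable (fun x => b x * laguerreFun k x) (volume.restrict (Ioi 0)) :=
    hb.integrable_mul (memLp_laguerreFun k)
  have hderiv (x : ℝ) : b x * deriv (laguerreFun j) x
      = -(b x * laguerreFun j x + 2 * ∑ k ∈ range j, b x * laguerreFun k x) := by
    rw [(hasDerivAt_laguerreFun j x).deriv, ← mul_sum]
    ring
  rw [laguerreCoef, hIPP, integral_congr_ae (ae_of_all _ hderiv), integral_neg, neg_neg,
    integral_add (hint j) ((integrable_finsetSum _ fun k _ => hint k).const_mul 2),
    integral_const_mul, integral_finsetSum _ fun k _ => hint k]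
  rfl

theorem sum_range_mul_sum_range {R : Type*} [CommSemiring R] (a l : ℕ → R) (m : ℕ) :
    (∑ j ∈ range m, a j) * ∑ j ∈ range m, l j = ∑ j ∈ range m,
      (a j * l j + a j * ∑ k ∈ range j, l k + (∑ k ∈ range j, a k) * l j) := by
  induction m with
  | zero => simp
  | succ m ih =>
    simp only [sum_range_succ, ← ih]
    ring

theorem deriv_laguerreProj_sub_laguerreProj {b b' : ℝ → ℝ} {m : ℕ}
    (hcoef : ∀ j < m,
      laguerreCoef b' j = laguerreCoef b j + 2 * ∑ k ∈ range j, laguerreCoef b k)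
    (x : ℝ) :
    deriv (laguerreProj b m) x - laguerreProj b' m x
      = -2 * (∑ k ∈ range m, laguerreCoef b k) * ∑ k ∈ range m, laguerreFun k x := by
  have hproj : laguerreProj b' m x = ∑ j ∈ range m,
      (laguerreCoef b j + 2 * ∑ k ∈ range j, laguerreCoef b k) * laguerreFun j x :=
    sum_congr rfl fun j hj => by rw [hcoef j (mem_range.mp hj)]
  rw [(hasDerivAt_laguerreProj b m x).deriv, hproj, mul_assoc,
    sum_range_mul_sum_range, mul_sum, ← sum_sub_distrib]
  exact sum_congr rfl fun j _ => by ring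

theorem integral_sq_sum_laguerreFun (m : ℕ) :
    ∫ x in Ioi (0 : ℝ), (∑ k ∈ range m, laguerreFun k x) ^ 2 = m := by
  simp_rw [sq, sum_mul_sum]
  rw [integral_finsetSum _ fun j _ => integrable_finsetSum _ fun k _ =>
    integrableOn_laguerreFun_mul_laguerreFun j k]
  simp_rw [integral_finsetSum _ fun k _ => integrableOn_laguerreFun_mul_laguerreFun _ k,
    integral_laguerreFun_mul_laguerreFun, sum_ite_eq]
  rw [sum_congr rfl fun j hj => if_pos hj]
  simp

theorem laguerre_deriv_proj_diff_general (m : ℕ) (b : ℝ → ℝ)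
    (hbL2 : MemLp b 2 ((volume : Measure ℝ).restrict (Set.Ioi 0)))
    (hIPP : ∀ j < m,
      (∫ x in Set.Ioi (0 : ℝ), deriv b x * laguerreFun j x)
        = -∫ x in Set.Ioi (0 : ℝ), b x * deriv (laguerreFun j) x) :
    (∫ x in Set.Ioi (0 : ℝ),
        (deriv (laguerreProj b m) x - laguerreProj (deriv b) m x) ^ 2)
      = 4 * (m : ℝ) * (∑ k ∈ Finset.range m, laguerreCoef b k) ^ 2 := by
  have hpoint := deriv_laguerreProj_sub_laguerreProj
    (fun j hj => laguerreCoef_eq_of_integral_mul_laguerreFun_eq hbL2 (hIPP j hj))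
  simp_rw [hpoint, mul_pow, integral_const_mul, integral_sq_sum_laguerreFun]
  ring

/-- In the Laguerre basis, under integration by parts (`⟨b',ℓ_j⟩ = -⟨b,ℓ_j'⟩` for `j < m`),
one has `‖b_m' - (b')_m‖² = 4m (∑_{k=0}^{m-1} ⟨b,ℓ_k⟩)²`. -/
theorem laguerre_deriv_proj_diff (m : ℕ) (b : ℝ → ℝ)
    (hb : Differentiable ℝ b)
    (hbL2 : MemLp b 2 ((volume : Measure ℝ).restrict (Set.Ioi 0)))
    (hb'L2 : MemLp (deriv b) 2 ((volume : Measure ℝ).restrict (Set.Ioi 0)))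
    (hIPP : ∀ j < m,
      (∫ x in Set.Ioi (0 : ℝ), deriv b x * laguerreFun j x)
        = -∫ x in Set.Ioi (0 : ℝ), b x * deriv (laguerreFun j) x) :
    (∫ x in Set.Ioi (0 : ℝ),
        (deriv (laguerreProj b m) x - laguerreProj (deriv b) m x) ^ 2)
      = 4 * (m : ℝ) * (∑ k ∈ Finset.range m, laguerreCoef b k) ^ 2 :=
  laguerre_deriv_proj_diff_general m b hbL2 hIPP
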